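/- arXiv:2007.03497 — 5 statements merged into one kernel-verified Lean document; each statement's English description precedes it below -/
import Mathlib

section
/- Let λ_h > 0 and let λ_1, …, λ_I (I ≥ 1) be strictly positive, pairwise distinct real numbers. Let A ~ Exp(λ_h) and let B = X_1 + … + X_I be a sum of independent Exp(λ_i) random variables, with A independent of B. Then the ratio Q = A / B has probability density function f_Q(q) = λ_h (∏_{j=1}^I λ_j) · Σ_{i=1}^I 1 / [ (λ_h q + λ_i)² · ∏_{j≠i} (λ_j − λ_i) ] for q > 0, with respect to Lebesgue measure. -/
open MeasureTheory ProbabilityTheory Real Finset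

/-!
For `x ≥ 0`, independence gives `P(A / B ≤ x) = E[1 - exp (-λ_h x B)] = 1 - ∏ᵢ λᵢ / (λᵢ + λ_h x)`,
the product being the moment generating function of the hypoexponential `B` at `-λ_h x`. So the
CDF is `1 - (∏ⱼ λⱼ) / ∏ⱼ (λ_h x + λⱼ)`, whose derivative is
`λ_h (∏ⱼ λⱼ) (∑ᵢ 1 / (λ_h x + λᵢ)) / ∏ⱼ (λ_h x + λⱼ)`. This is the stated density by the partial
fraction identity `∑ᵢ 1 / ((t + λᵢ)² ∏_{j ≠ i} (λⱼ - λᵢ)) = (∑ᵢ 1 / (t + λᵢ)) / ∏ⱼ (t + λⱼ)`,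
which is the derivative in `t` of the Lagrange interpolation identity
`∑ᵢ 1 / ((t + λᵢ) ∏_{j ≠ i} (λⱼ - λᵢ)) = 1 / ∏ⱼ (t + λⱼ)` (interpolate `1` at the nodes `-λᵢ`).
-/

section PartialFractions

variable {ι : Type*} [Fintype ι] [DecidableEq ι]

theorem sum_inv_mul_prod_erase_sub {K : Type*} [Field K] [Nonempty ι] {a : ι → K}
    (ha : Function.Injective a) {t : K} (ht : ∀ j, t + a j ≠ 0) :
    ∑ i, ((t + a i) * ∏ j ∈ univ.erase i, (a j - a i))⁻¹ = (∏ j, (t + a j))⁻¹ := by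
  have hv : Set.InjOn (fun i => -a i) (univ : Finset ι) :=
    fun i _ j _ h => ha (neg_injective h)
  have hbasis := congrArg (Polynomial.eval t) (Lagrange.sum_basis hv univ_nonempty)
  simp only [Polynomial.eval_finsetSum, Polynomial.eval_one, Lagrange.basis,
    Polynomial.eval_prod, Lagrange.basisDivisor, Polynomial.eval_mul, Polynomial.eval_C,
    Polynomial.eval_sub, Polynomial.eval_X, sub_neg_eq_add, neg_add_eq_sub] at hbasis
  rw [← one_mul (∏ j, (t + a j))⁻¹, ← hbasis, sum_mul]
  refine sum_congr rfl fun i _ => ?_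
  rw [← mul_prod_erase univ (fun j => t + a j) (mem_univ i), prod_mul_distrib, prod_inv_distrib]
  have : ∏ j ∈ univ.erase i, (t + a j) ≠ 0 := prod_ne_zero_iff.2 fun j _ => ht j
  field_simp

variable {𝕜 : Type*} [NontriviallyNormedField 𝕜]

theorem hasDerivAt_inv_prod_add {a : ι → 𝕜} {t : 𝕜} (ht : ∀ j, t + a j ≠ 0) :
    HasDerivAt (fun s => (∏ j, (s + a j))⁻¹)
      (-((∑ i, (t + a i)⁻¹) * (∏ j, (t + a j))⁻¹)) t := by
  have hprod :
      HasDerivAt (fun s => ∏ j, (s + a j)) (∑ i, ∏ j ∈ univ.erase i, (t + a j)) t := by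
    simpa using HasDerivAt.fun_finsetProd (u := univ) (f' := fun _ => 1)
      fun j _ => (hasDerivAt_id t).add_const (a j)
  refine (hprod.inv (prod_ne_zero_iff.2 fun j _ => ht j)).congr_deriv ?_
  rw [sum_mul, neg_div, sum_div]
  refine congrArg _ <| sum_congr rfl fun i _ => ?_
  rw [← mul_prod_erase univ (fun j => t + a j) (mem_univ i)]
  have : ∏ j ∈ univ.erase i, (t + a j) ≠ 0 := prod_ne_zero_iff.2 fun j _ => ht j
  have := ht i
  field_simp

theorem sum_inv_sq_mul_prod_erase_sub [Nonempty ι] {a : ι → 𝕜} (ha : Function.Injective a)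
    {t : 𝕜} (ht : ∀ j, t + a j ≠ 0) :
    ∑ i, ((t + a i) ^ 2 * ∏ j ∈ univ.erase i, (a j - a i))⁻¹
      = (∑ i, (t + a i)⁻¹) * (∏ j, (t + a j))⁻¹ := by
  have hsum : HasDerivAt (fun s => ∑ i, ((s + a i) * ∏ j ∈ univ.erase i, (a j - a i))⁻¹)
      (-∑ i, ((t + a i) ^ 2 * ∏ j ∈ univ.erase i, (a j - a i))⁻¹) t := by
    simp only [mul_inv, ← sum_neg_distrib, ← neg_mul]
    exact HasDerivAt.fun_sum fun i _ =>
      ((hasDerivAt_inv (ht i)).comp_add_const t (a i)).mul_const _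
  have heq : (fun s => ∑ i, ((s + a i) * ∏ j ∈ univ.erase i, (a j - a i))⁻¹)
      =ᶠ[nhds t] fun s => (∏ j, (s + a j))⁻¹ := by
    filter_upwards [Filter.eventually_all.2 fun j =>
      ((continuous_add_const (a j)).continuousAt (x := t)).eventually_ne (ht j)] with s hs
    exact sum_inv_mul_prod_erase_sub ha hs
  exact neg_injective <|
    (hsum.congr_of_eventuallyEq heq.symm).unique (hasDerivAt_inv_prod_add ht)

theorem hasDerivAt_neg_div_prod_mul_add [Nonempty ι] {a : ι → 𝕜} (ha : Function.Injective a)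
    (b c : 𝕜) {y : 𝕜} (hy : ∀ j, b * y + a j ≠ 0) :
    HasDerivAt (fun y => -(c / ∏ j, (b * y + a j)))
      (b * c * ∑ i, ((b * y + a i) ^ 2 * ∏ j ∈ univ.erase i, (a j - a i))⁻¹) y := by
  simp only [div_eq_mul_inv]
  refine (((hasDerivAt_inv_prod_add hy).comp y ((hasDerivAt_id y).const_mul b)).const_mul c).neg
    |>.congr_deriv ?_
  rw [sum_inv_sq_mul_prod_erase_sub ha hy]
  simp only [mul_one]
  ring

theorem sum_inv_sq_mul_prod_erase_sub_nonneg [Nonempty ι] {a : ι → ℝ} (ha : Function.Injective a)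
    {t : ℝ} (ht : ∀ j, 0 < t + a j) :
    0 ≤ ∑ i, ((t + a i) ^ 2 * ∏ j ∈ univ.erase i, (a j - a i))⁻¹ := by
  rw [sum_inv_sq_mul_prod_erase_sub ha fun j => (ht j).ne']
  exact mul_nonneg (sum_nonneg fun i _ => (inv_pos.2 (ht i)).le)
    (inv_nonneg.2 (prod_pos fun j _ => ht j).le)

end PartialFractions

section Exponential

variable {r : ℝ}

theorem expMeasure_Iic_of_nonneg (hr : 0 < r) {x : ℝ} (hx : 0 ≤ x) :
    expMeasure r (Set.Iic x) = ENNReal.ofReal (1 - exp (-(r * x))) := by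
  have := isProbabilityMeasure_expMeasure hr
  rw [← ofReal_cdf, cdf_expMeasure_eq hr, if_pos hx]

theorem ae_pos_expMeasure (hr : 0 < r) : ∀ᵐ x ∂expMeasure r, 0 < x := by
  rw [ae_iff]
  simpa [not_lt, ← Set.Iic_def] using expMeasure_Iic_of_nonneg hr le_rfl

theorem mgf_id_expMeasure (hr : 0 < r) {t : ℝ} (ht : t < r) :
    mgf id (expMeasure r) t = r / (r - t) := by
  rw [mgf, expMeasure, gammaMeasure, integral_withDensity_eq_integral_toReal_smul
    (f := gammaPDF 1 r) (measurable_gammaPDFReal 1 r).ennreal_ofReal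
    (ae_of_all _ fun _ => ENNReal.ofReal_lt_top)]
  have hdens : ∀ x, (gammaPDF 1 r x).toReal • exp (t * id x)
      = Set.indicator (Set.Ici 0) (fun x => r * exp (-(r - t) * x)) x := by
    intro x
    rw [gammaPDF, ENNReal.toReal_ofReal (gammaPDFReal_nonneg one_pos hr x), gammaPDFReal,
      smul_eq_mul, Set.indicator_apply]
    by_cases hx : 0 ≤ x
    · simp only [if_pos hx, if_pos (Set.mem_Ici.2 hx), sub_self, rpow_zero, rpow_one, Gamma_one,
        id]
      rw [div_one, mul_one, mul_assoc, ← exp_add]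
      ring_nf
    · simp [hx]
  rw [integral_congr_ae (ae_of_all _ hdens), integral_indicator measurableSet_Ici,
    integral_Ici_eq_integral_Ioi, integral_const_mul, integral_exp_mul_Ioi (by linarith) 0]
  field_simp
  simp

theorem ae_pos_of_map_eq_expMeasure {Ω : Type*} {mΩ : MeasurableSpace Ω} {μ : Measure Ω}
    {X : Ω → ℝ} (hX : AEMeasurable X μ) (hr : 0 < r) (hlaw : μ.map X = expMeasure r) :
    ∀ᵐ ω ∂μ, 0 < X ω :=
  ae_of_ae_map hX (hlaw ▸ ae_pos_expMeasure hr)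

theorem mgf_sum_of_map_eq_expMeasure {Ω ι : Type*} {mΩ : MeasurableSpace Ω} {μ : Measure Ω}
    [Fintype ι] {X : ι → Ω → ℝ} {rate : ι → ℝ} (hrate : ∀ i, 0 < rate i)
    (hX : ∀ i, AEMeasurable (X i) μ) (hindep : iIndepFun X μ)
    (hlaw : ∀ i, μ.map (X i) = expMeasure (rate i)) {t : ℝ} (ht : ∀ i, t < rate i) :
    mgf (fun ω => ∑ i, X i ω) μ t = ∏ i, rate i / (rate i - t) := by
  rw [show (fun ω => ∑ i, X i ω) = ∑ i, X i by ext; simp, hindep.mgf_sum₀ hX]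
  refine prod_congr rfl fun i _ => ?_
  rw [← mgf_id_map (hX i), hlaw i, mgf_id_expMeasure (hrate i) (ht i)]

end Exponential

section Ratio

variable {Ω : Type*} {mΩ : MeasurableSpace Ω} {μ : Measure Ω} {A B : Ω → ℝ}

theorem measure_div_le_eq_lintegral [IsFiniteMeasure μ] (hA : Measurable A) (hB : Measurable B)
    (hAB : IndepFun A B μ) (hBpos : ∀ᵐ ω ∂μ, 0 < B ω) (x : ℝ) :
    μ ((fun ω => A ω / B ω) ⁻¹' Set.Iic x)
      = ∫⁻ b, μ.map A (Set.Iic (x * b)) ∂μ.map B := by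
  have hS : MeasurableSet {p : ℝ × ℝ | p.2 ≤ x * p.1} :=
    measurableSet_le measurable_snd (measurable_fst.const_mul x)
  have hset : (fun ω => A ω / B ω) ⁻¹' Set.Iic x
      =ᵐ[μ] (fun ω => (B ω, A ω)) ⁻¹' {p : ℝ × ℝ | p.2 ≤ x * p.1} := by
    filter_upwards [hBpos] with ω hω
    exact propext (div_le_iff₀ hω)
  rw [measure_congr hset, ← Measure.map_apply (hB.prodMk hA) hS,
    (indepFun_iff_map_prod_eq_prod_map_map hB.aemeasurable hA.aemeasurable).1 hAB.symm,
    Measure.prod_apply hS]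
  rfl

theorem lintegral_ofReal_one_sub_exp_neg_mul {ν : Measure ℝ} [IsProbabilityMeasure ν]
    (hν : ∀ᵐ b ∂ν, 0 ≤ b) {s : ℝ} (hs : 0 ≤ s) :
    ∫⁻ b, ENNReal.ofReal (1 - exp (-s * b)) ∂ν = ENNReal.ofReal (1 - mgf id ν (-s)) := by
  have hle : ∀ᵐ b ∂ν, exp (-s * b) ≤ 1 := by
    filter_upwards [hν] with b hb
    exact exp_le_one_iff.2 (by nlinarith)
  have hint : Integrable (fun b => exp (-s * b)) ν :=
    (integrable_const 1).mono' (by fun_prop) (by simpa using hle)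
  have hint' : Integrable (fun b => 1 - exp (-s * b)) ν := (integrable_const 1).sub hint
  rw [← ofReal_integral_eq_lintegral_ofReal hint'
      (by filter_upwards [hle] with b hb; simpa using hb),
    integral_sub (integrable_const 1) hint, mgf]
  simp

theorem measure_div_le_of_map_eq_expMeasure [IsProbabilityMeasure μ] {r : ℝ} (hr : 0 < r)
    (hA : Measurable A) (hB : Measurable B) (hAlaw : μ.map A = expMeasure r) (hAB : IndepFun A B μ)
    (hBpos : ∀ᵐ ω ∂μ, 0 < B ω) {x : ℝ} (hx : 0 ≤ x) :
    μ ((fun ω => A ω / B ω) ⁻¹' Set.Iic x) = ENNReal.ofReal (1 - mgf B μ (-(r * x))) := by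
  have : IsProbabilityMeasure (μ.map B) := Measure.isProbabilityMeasure_map hB.aemeasurable
  have hBpos' : ∀ᵐ b ∂μ.map B, 0 < b :=
    (ae_map_iff hB.aemeasurable measurableSet_Ioi).2 hBpos
  rw [measure_div_le_eq_lintegral hA hB hAB hBpos, hAlaw, ← mgf_id_map hB.aemeasurable,
    ← lintegral_ofReal_one_sub_exp_neg_mul (hBpos'.mono fun b hb => hb.le) (by positivity)]
  refine lintegral_congr_ae (hBpos'.mono fun b hb => ?_)
  simp only [expMeasure_Iic_of_nonneg hr (by positivity : 0 ≤ x * b)]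
  ring_nf

end Ratio

theorem eq_withDensity_of_measure_Iic_eq_sub {μ : Measure ℝ} [IsFiniteMeasure μ]
    {F g : ℝ → ℝ}
    (hFcont : ContinuousOn F (Set.Ici 0)) (hderiv : ∀ y, 0 < y → HasDerivAt F (g y) y)
    (hg : ∀ y, 0 < y → 0 ≤ g y)
    (hμ : ∀ x, 0 ≤ x → μ (Set.Iic x) = ENNReal.ofReal (F x - F 0)) :
    μ = volume.withDensity (fun y => ENNReal.ofReal (if 0 < y then g y else 0)) := by
  have hzero :
      ∀ x ≤ 0, ∫⁻ y in Set.Iic x, ENNReal.ofReal (if 0 < y then g y else 0) = 0 := by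
    intro x hx
    rw [setLIntegral_congr_fun measurableSet_Iic fun y hy => by
      rw [if_neg (not_lt.2 (le_trans hy hx)), ENNReal.ofReal_zero], lintegral_zero]
  refine Measure.ext_of_Iic _ _ fun x => ?_
  rw [withDensity_apply _ measurableSet_Iic]
  rcases le_or_gt x 0 with hx | hx
  · rw [hzero x hx, measure_mono_null (Set.Iic_subset_Iic.2 hx) (by simp [hμ 0 le_rfl])]
  have hint : IntegrableOn g (Set.Ioc 0 x) :=
    intervalIntegral.integrableOn_deriv_of_nonneg (hFcont.mono Set.Icc_subset_Ici_self)
      (fun y hy => hderiv y hy.1) fun y hy => hg y hy.1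
  rw [hμ x hx.le, ← Set.Iic_union_Ioc_eq_Iic hx.le,
    lintegral_union measurableSet_Ioc (Set.Iic_disjoint_Ioc le_rfl), hzero 0 le_rfl, zero_add,
    setLIntegral_congr_fun measurableSet_Ioc fun y hy => by rw [if_pos hy.1],
    ← ofReal_integral_eq_lintegral_ofReal hint
      ((ae_restrict_mem measurableSet_Ioc).mono fun y hy => hg y hy.1),
    ← intervalIntegral.integral_of_le hx.le,
    intervalIntegral.integral_eq_sub_of_hasDerivAt_of_le hx.le
      (hFcont.mono Set.Icc_subset_Ici_self) (fun y hy => hderiv y hy.1)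
      ((intervalIntegrable_iff_integrableOn_Ioc_of_le hx.le).2 hint)]

/-- If `A ~ Exp(λ_h)` is independent of `B`, a sum of `I ≥ 1` independent exponential random
variables with strictly positive pairwise distinct rates `λ i`, then `Q = A / B` has density
`q ↦ λ_h (∏ j, λ j) Σ i, 1 / ((λ_h q + λ i)² ∏_{j ≠ i} (λ j − λ i))` for `q > 0`
with respect to Lebesgue measure. -/
theorem ratio_exponential_hypoexponential_pdf
    {Ω : Type*} [MeasureSpace Ω] [IsProbabilityMeasure (ℙ : Measure Ω)]
    (lamh : ℝ) (hlamh : 0 < lamh)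
    (I : ℕ) (hI : 1 ≤ I)
    (lam : Fin I → ℝ) (hpos : ∀ i, 0 < lam i) (hdist : Function.Injective lam)
    (A : Ω → ℝ) (hAmeas : Measurable A)
    (hAlaw : Measure.map A ℙ = expMeasure lamh)
    (X : Fin I → Ω → ℝ) (hmeas : ∀ i, Measurable (X i))
    (hindep : iIndepFun X ℙ)
    (hlaw : ∀ i, Measure.map (X i) ℙ = expMeasure (lam i))
    (hAB : IndepFun A (fun ω => ∑ i, X i ω) ℙ) :
    Measure.map (fun ω => A ω / ∑ i, X i ω) ℙ
      = volume.withDensity (fun q =>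
          ENNReal.ofReal (if 0 < q then
              lamh * (∏ j, lam j) *
                ∑ i, 1 / ((lamh * q + lam i) ^ 2 *
                  ∏ j ∈ Finset.univ.erase i, (lam j - lam i))
            else 0)) := by
  have : Nonempty (Fin I) := ⟨⟨0, hI⟩⟩
  have hBpos : ∀ᵐ ω ∂ℙ, 0 < ∑ i, X i ω := by
    filter_upwards [ae_all_iff.2 fun i =>
      ae_pos_of_map_eq_expMeasure (hmeas i).aemeasurable (hpos i) (hlaw i)] with ω hω
      using sum_pos (fun i _ => hω i) univ_nonempty
  have hP : 0 < ∏ j, lam j := prod_pos fun j _ => hpos j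
  have hshift : ∀ y, 0 ≤ y → ∀ j, 0 < lamh * y + lam j := fun y hy j => by
    have := hpos j
    positivity
  have hF := fun y (hy : 0 ≤ y) =>
    hasDerivAt_neg_div_prod_mul_add hdist lamh (∏ j, lam j) fun j => (hshift y hy j).ne'
  simp only [one_div]
  refine eq_withDensity_of_measure_Iic_eq_sub
    (fun y hy => (hF y hy).continuousAt.continuousWithinAt)
    (fun y hy => hF y hy.le) (fun y hy => mul_nonneg (mul_nonneg hlamh.le hP.le)
      (sum_inv_sq_mul_prod_erase_sub_nonneg hdist (hshift y hy.le))) fun x hx => ?_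
  rw [Measure.map_apply (by fun_prop) measurableSet_Iic,
    measure_div_le_of_map_eq_expMeasure hlamh hAmeas (by fun_prop) hAlaw hAB hBpos hx,
    mgf_sum_of_map_eq_expMeasure hpos (fun i => (hmeas i).aemeasurable) hindep hlaw
      fun i => by linarith [hshift x hx i]]
  simp only [prod_div_distrib, sub_neg_eq_add, mul_zero, zero_add, div_self hP.ne']
  simp_rw [add_comm (lam _)]
  ring_nf
end

section
/- Let H be exponentially distributed with rate λ_h > 0, let Φ_k > 0, let Φ_Σ ≥ 0, and let c > 0 satisfy Φ_k > c·Φ_Σ. Then for every s > 0, P[ H·Φ_k / (s·H·Φ_Σ + 1) < c/s ] = 1 − exp( −λ_h c / ( s (Φ_k − c·Φ_Σ) ) ). -/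
open MeasureTheory ProbabilityTheory Real

/-!
Since `H > 0` almost surely, the SINR condition may be read for `H ≥ 0` only, where clearing
the positive denominator turns it into the linear condition `H < c / (s (Φ_k − c Φ_Σ))`.
The outage probability is therefore the exponential CDF at that threshold.
-/

namespace ProbabilityTheory

variable {r : ℝ}

lemma expMeasure_Iic (hr : 0 < r) (x : ℝ) :
    expMeasure r (Set.Iic x) = ENNReal.ofReal (1 - exp (-(r * x))) := by
  have := isProbabilityMeasure_expMeasure hr
  rw [← ofReal_cdf, cdf_expMeasure_eq hr]
  split_ifs with hx
  · rfl
  · -- below `0` the formula is negative, hence truncated to `0` by `ENNReal.ofReal`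
    rw [ENNReal.ofReal_zero, eq_comm, ENNReal.ofReal_eq_zero, sub_nonpos, one_le_exp_iff]
    nlinarith

lemma expMeasure_Iio (hr : 0 < r) (x : ℝ) :
    expMeasure r (Set.Iio x) = ENNReal.ofReal (1 - exp (-(r * x))) := by
  rw [← expMeasure_Iic hr]
  exact measure_congr ((withDensity_absolutelyContinuous _ _).ae_eq Iio_ae_eq_Iic)

lemma ae_pos_expMeasure (hr : 0 < r) : ∀ᵐ x ∂expMeasure r, 0 < x := by
  rw [ae_iff]
  refine measure_mono_null (t := Set.Iic 0) (fun _ hx ↦ not_lt.1 hx) ?_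
  simpa using expMeasure_Iic hr 0

variable {Ω : Type*} [MeasurableSpace Ω] {μ : Measure Ω} {X : Ω → ℝ}

lemma ae_pos_of_map_eq_expMeasure (hr : 0 < r) (hX : AEMeasurable X μ)
    (hlaw : μ.map X = expMeasure r) : ∀ᵐ ω ∂μ, 0 < X ω :=
  ae_of_ae_map hX (hlaw ▸ ae_pos_expMeasure hr)

lemma measure_lt_of_map_eq_expMeasure (hr : 0 < r) (hX : AEMeasurable X μ)
    (hlaw : μ.map X = expMeasure r) (t : ℝ) :
    μ {ω | X ω < t} = ENNReal.ofReal (1 - exp (-(r * t))) := by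
  rw [← expMeasure_Iio hr, ← hlaw, Measure.map_apply_of_aemeasurable hX measurableSet_Iio]
  rfl

end ProbabilityTheory

lemma sinr_lt_iff {x Phik PhiSum c s : ℝ} (hx : 0 ≤ x) (hPhiSum : 0 ≤ PhiSum) (hs : 0 < s)
    (hdom : c * PhiSum < Phik) :
    x * Phik / (s * (x * PhiSum) + 1) < c / s ↔ x < c / (s * (Phik - c * PhiSum)) := by
  have hden : 0 < s * (x * PhiSum) + 1 := by positivity
  have hD : 0 < s * (Phik - c * PhiSum) := mul_pos hs (sub_pos.2 hdom)
  rw [div_lt_div_iff₀ hden hs, lt_div_iff₀ hD]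
  constructor <;> intro h <;> linarith

theorem direct_noma_outage_exact_general
    {Ω : Type*} [MeasureSpace Ω]
    (lamh Phik PhiSum c : ℝ)
    (hlamh : 0 < lamh) (hPhiSum : 0 ≤ PhiSum)
    (hdom : c * PhiSum < Phik)
    (H : Ω → ℝ) (hHmeas : Measurable H)
    (hHlaw : Measure.map H ℙ = expMeasure lamh)
    (s : ℝ) (hs : 0 < s) :
    ℙ {ω | H ω * Phik / (s * (H ω * PhiSum) + 1) < c / s}
      = ENNReal.ofReal (1 - Real.exp (-(lamh * c) / (s * (Phik - c * PhiSum)))) := by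
  have hevent : {ω | H ω * Phik / (s * (H ω * PhiSum) + 1) < c / s}
      =ᵐ[ℙ] {ω | H ω < c / (s * (Phik - c * PhiSum))} := by
    filter_upwards [ae_pos_of_map_eq_expMeasure hlamh hHmeas.aemeasurable hHlaw] with ω hω
    exact propext (sinr_lt_iff hω.le hPhiSum hs hdom)
  rw [measure_congr hevent,
    measure_lt_of_map_eq_expMeasure hlamh hHmeas.aemeasurable hHlaw, neg_div, mul_div_assoc]

/-- For `H ~ Exp(λ_h)`, `Φ_k > 0`, `Φ_Σ ≥ 0`, `c > 0` with `Φ_k > c Φ_Σ`, and every `s > 0`,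
`P[H Φ_k / (s H Φ_Σ + 1) < c / s] = 1 − exp(−λ_h c / (s (Φ_k − c Φ_Σ)))`. -/
theorem direct_noma_outage_exact
    {Ω : Type*} [MeasureSpace Ω] [IsProbabilityMeasure (ℙ : Measure Ω)]
    (lamh Phik PhiSum c : ℝ)
    (hlamh : 0 < lamh) (hPhik : 0 < Phik) (hPhiSum : 0 ≤ PhiSum) (hc : 0 < c)
    (hdom : c * PhiSum < Phik)
    (H : Ω → ℝ) (hHmeas : Measurable H)
    (hHlaw : Measure.map H ℙ = expMeasure lamh)
    (s : ℝ) (hs : 0 < s) :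
    ℙ {ω | H ω * Phik / (s * (H ω * PhiSum) + 1) < c / s}
      = ENNReal.ofReal (1 - Real.exp (-(lamh * c) / (s * (Phik - c * PhiSum)))) :=
  direct_noma_outage_exact_general lamh Phik PhiSum c hlamh hPhiSum hdom H hHmeas hHlaw s hs
end

section
/- Let H be exponentially distributed with rate λ_h > 0, let Φ_k > 0, let Φ_Σ ≥ 0, and let c > 0 satisfy Φ_k > c·Φ_Σ. Then lim_{s→∞} s · P[ H·Φ_k / (s·H·Φ_Σ + 1) < c/s ] = λ_h c / (Φ_k − c·Φ_Σ). In particular, the rate outage probability of the direct-NOMA term decays as λ_h c / (s (Φ_k − c·Φ_Σ)) in the high-SNR limit. -/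
open MeasureTheory ProbabilityTheory Real Filter Topology

/-! For `s > 0` and `H ≥ 0` the outage event is exactly `H < c / (s (Φ_k - c Φ_Σ))`, so by the
exponential CDF its probability is `1 - exp (-(a / s))` with `a = λ_h c / (Φ_k - c Φ_Σ)`. Then
`s (1 - exp (-(a / s)))` is the difference quotient at `0` of `u ↦ 1 - exp (-(a u))`, whose
derivative there is `a`. -/

lemma expMeasure_Iio {r : ℝ} (hr : 0 < r) {t : ℝ} (ht : 0 ≤ t) :
    expMeasure r (Set.Iio t) = ENNReal.ofReal (1 - exp (-(r * t))) := by
  rw [expMeasure, gammaMeasure, withDensity_apply _ measurableSet_Iio,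
    setLIntegral_congr Iio_ae_eq_Iic]
  exact (lintegral_exponentialPDF_eq_antiDeriv hr t).trans (by rw [if_pos ht])

lemma tendsto_mul_one_sub_exp_neg_div (a : ℝ) :
    Tendsto (fun s => s * (1 - exp (-(a / s)))) atTop (𝓝 a) := by
  have hderiv : HasDerivAt (fun u => 1 - exp (-(a * u))) a 0 := by
    simpa using (((hasDerivAt_id (0 : ℝ)).const_mul a).neg.exp).const_sub 1
  refine ((hasDerivAt_iff_tendsto_slope.mp hderiv).comp
    (tendsto_inv_atTop_nhdsGT_zero.mono_right (nhdsGT_le_nhdsNE 0))).congr' ?_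
  filter_upwards [eventually_ne_atTop 0] with s hs
  simp [slope_def_field, div_eq_mul_inv, mul_comm]

section Law

variable {Ω : Type*} [MeasurableSpace Ω] {μ : Measure Ω} {X : Ω → ℝ} {r : ℝ}

lemma measure_lt_of_map_eq_expMeasure (hX : Measurable X) (hlaw : μ.map X = expMeasure r)
    (hr : 0 < r) {t : ℝ} (ht : 0 ≤ t) :
    μ {ω | X ω < t} = ENNReal.ofReal (1 - exp (-(r * t))) := by
  rw [← expMeasure_Iio hr ht, ← hlaw, Measure.map_apply hX measurableSet_Iio]
  rfl

lemma ae_nonneg_of_map_eq_expMeasure (hX : Measurable X) (hlaw : μ.map X = expMeasure r)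
    (hr : 0 < r) : ∀ᵐ ω ∂μ, 0 ≤ X ω := by
  simpa [ae_iff] using measure_lt_of_map_eq_expMeasure hX hlaw hr le_rfl

end Law

lemma mul_div_mul_add_one_lt_div_iff {h s Φ Φ' c : ℝ} (hh : 0 ≤ h) (hs : 0 < s) (hΦ' : 0 ≤ Φ')
    (hdom : c * Φ' < Φ) :
    h * Φ / (s * (h * Φ') + 1) < c / s ↔ h < c / (s * (Φ - c * Φ')) := by
  have hd : 0 < s * (Φ - c * Φ') := mul_pos hs (by linarith)
  rw [div_lt_div_iff₀ (by positivity) hs, lt_div_iff₀ hd]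
  constructor <;> intro hlt <;> nlinarith

theorem direct_noma_outage_asymptotic_general
    {Ω : Type*} [MeasureSpace Ω]
    (lamh Phik PhiSum c : ℝ)
    (hlamh : 0 < lamh) (hPhiSum : 0 ≤ PhiSum) (hc : 0 < c)
    (hdom : c * PhiSum < Phik)
    (H : Ω → ℝ) (hHmeas : Measurable H)
    (hHlaw : Measure.map H ℙ = expMeasure lamh) :
    Tendsto (fun s : ℝ =>
        s * (ℙ {ω | H ω * Phik / (s * (H ω * PhiSum) + 1) < c / s}).toReal)
      atTop (𝓝 (lamh * c / (Phik - c * PhiSum))) := by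
  set d := Phik - c * PhiSum
  have hd : 0 < d := by linarith
  refine (tendsto_mul_one_sub_exp_neg_div (lamh * c / d)).congr' ?_
  filter_upwards [eventually_gt_atTop 0] with s hs
  have hevent : ℙ {ω | H ω * Phik / (s * (H ω * PhiSum) + 1) < c / s}
      = ℙ {ω | H ω < c / (s * d)} := by
    refine measure_congr ?_
    filter_upwards [ae_nonneg_of_map_eq_expMeasure hHmeas hHlaw hlamh] with ω hω
    exact propext (mul_div_mul_add_one_lt_div_iff hω hs hPhiSum hdom)
  have hexp : exp (-(lamh * (c / (s * d)))) ≤ 1 :=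
    exp_le_one_iff.mpr (neg_nonpos.mpr (by positivity))
  rw [hevent, measure_lt_of_map_eq_expMeasure hHmeas hHlaw hlamh (by positivity),
    ENNReal.toReal_ofReal (sub_nonneg.mpr hexp)]
  congr 4
  field_simp

/-- For `H ~ Exp(λ_h)`, `Φ_k > 0`, `Φ_Σ ≥ 0`, `c > 0` with `Φ_k > c Φ_Σ`,
`lim_{s→∞} s · P[H Φ_k / (s H Φ_Σ + 1) < c / s] = λ_h c / (Φ_k − c Φ_Σ)`:
the direct-NOMA rate outage probability decays as `λ_h c / (s (Φ_k − c Φ_Σ))`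
in the high-SNR limit. -/
theorem direct_noma_outage_asymptotic
    {Ω : Type*} [MeasureSpace Ω] [IsProbabilityMeasure (ℙ : Measure Ω)]
    (lamh Phik PhiSum c : ℝ)
    (hlamh : 0 < lamh) (hPhik : 0 < Phik) (hPhiSum : 0 ≤ PhiSum) (hc : 0 < c)
    (hdom : c * PhiSum < Phik)
    (H : Ω → ℝ) (hHmeas : Measurable H)
    (hHlaw : Measure.map H ℙ = expMeasure lamh) :
    Tendsto (fun s : ℝ =>
        s * (ℙ {ω | H ω * Phik / (s * (H ω * PhiSum) + 1) < c / s}).toReal)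
      atTop (𝓝 (lamh * c / (Phik - c * PhiSum))) :=
  direct_noma_outage_asymptotic_general lamh Phik PhiSum c hlamh hPhiSum hc hdom H hHmeas hHlaw
end

section
/- Let C and D be independent, each exponentially distributed with rate λ_g > 0, and let 0 < ε_1 ≤ 1. Then the random variable ν = (C + ε_1 D)² / (C + D) has expectation E[ν] = 2(1 + ε_1 + ε_1²) / (3 λ_g). -/
/-!
Since `ν ≥ 0`, the computation can be carried out with lower Lebesgue integrals, with no
integrability side conditions. By independence, `E[ν]` is an integral against the product of two
exponential laws. The shear `(c, d) ↦ (c, c + d)` preserves Lebesgue measure and turns the joint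
density `λ² e^{-λ(c + d)}` of `(C, D)` into the density `λ² e^{-λ s}` of `(C, C + D)` on
`0 ≤ c ≤ s`. For fixed `s` the inner integral is that of a polynomial:
`∫₀ˢ (c + ε(s - c))² dc / s = (1 + ε + ε²) s² / 3`, and what is left,
`λ² ∫₀^∞ s² e^{-λ s} ds = 2 / λ`, is the normalisation of the `Gamma(3, λ)` density.
-/

open MeasureTheory ProbabilityTheory Real Set
open scoped ENNReal

lemma integral_sq_add_mul_sub (e s : ℝ) :
    ∫ c in (0 : ℝ)..s, (c + e * (s - c)) ^ 2 = (1 + e + e ^ 2) / 3 * s ^ 3 := by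
  -- `c ^ 1` keeps the linear term in the shape matched by `integral_pow`
  have hexpand : ∀ c : ℝ, (c + e * (s - c)) ^ 2
      = (e * s) ^ 2 + 2 * e * s * (1 - e) * c ^ 1 + (1 - e) ^ 2 * c ^ 2 := fun c ↦ by ring
  simp_rw [hexpand]
  rw [intervalIntegral.integral_add, intervalIntegral.integral_add]
  · simp only [intervalIntegral.integral_const, intervalIntegral.integral_const_mul, integral_pow,
      smul_eq_mul]
    ring
  all_goals exact (by fun_prop : Continuous _).intervalIntegrable _ _

lemma lintegral_Icc_sq_add_mul_sub_div {s : ℝ} (hs : 0 ≤ s) (e : ℝ) :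
    ∫⁻ c in Icc 0 s, ENNReal.ofReal ((c + e * (s - c)) ^ 2 / s)
      = ENNReal.ofReal ((1 + e + e ^ 2) / 3 * s ^ 2) := by
  have hint : IntegrableOn (fun c ↦ (c + e * (s - c)) ^ 2 / s) (Icc 0 s) :=
    (by fun_prop : Continuous fun c ↦ (c + e * (s - c)) ^ 2 / s).integrableOn_Icc
  rw [← ofReal_integral_eq_lintegral_ofReal hint (ae_of_all _ fun c ↦ by positivity),
    integral_Icc_eq_integral_Ioc, ← intervalIntegral.integral_of_le hs,
    intervalIntegral.integral_div, integral_sq_add_mul_sub]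
  rcases hs.eq_or_lt with rfl | hs
  · simp
  · field_simp

lemma lintegral_Ici_sq_mul_exp_neg_mul {r : ℝ} (hr : 0 < r) :
    ∫⁻ s in Ici 0, ENNReal.ofReal (s ^ 2 * exp (-(r * s))) = ENNReal.ofReal (2 / r ^ 3) := by
  have hpdf : ∀ s ∈ Ici (0 : ℝ),
      ENNReal.ofReal (s ^ 2 * exp (-(r * s))) = ENNReal.ofReal (2 / r ^ 3) * gammaPDF 3 r s := by
    intro s hs
    rw [gammaPDF_of_nonneg hs, ← ENNReal.ofReal_mul (by positivity),
      show Gamma 3 = 2 by simp [Nat.factorial], show (3 : ℝ) - 1 = (2 : ℕ) by norm_num,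
      rpow_natCast, show (3 : ℝ) = (3 : ℕ) by norm_num, rpow_natCast]
    field_simp
  rw [setLIntegral_congr_fun measurableSet_Ici hpdf,
    lintegral_const_mul' _ _ ENNReal.ofReal_ne_top,
    setLIntegral_eq_of_support_subset (s := Ici 0) (f := gammaPDF 3 r)
      fun s hs ↦ not_lt.1 fun hneg ↦ hs (gammaPDF_of_neg hneg),
    lintegral_gammaPDF_eq_one (by norm_num) hr, mul_one]

namespace ProbabilityTheory

lemma IndepFun.lintegral_comp_eq_lintegral_prod {Ω α β : Type*} [MeasurableSpace Ω]
    [MeasurableSpace α] [MeasurableSpace β] {P : Measure Ω} [IsFiniteMeasure P]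
    {X : Ω → α} {Y : Ω → β} {μ : Measure α} {ν : Measure β} (hXY : IndepFun X Y P)
    (hX : Measurable X) (hY : Measurable Y) (hμ : P.map X = μ) (hν : P.map Y = ν)
    {f : α × β → ℝ≥0∞} (hf : Measurable f) :
    ∫⁻ ω, f (X ω, Y ω) ∂P = ∫⁻ z, f z ∂(μ.prod ν) := by
  rw [← hμ, ← hν,
    ← (indepFun_iff_map_prod_eq_prod_map_map hX.aemeasurable hY.aemeasurable).1 hXY,
    lintegral_map hf (hX.prodMk hY)]

lemma expMeasure_eq_withDensity (r : ℝ) :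
    expMeasure r = volume.withDensity (exponentialPDF r) := rfl

lemma measurable_exponentialPDF (r : ℝ) : Measurable (exponentialPDF r) :=
  (measurable_exponentialPDFReal r).ennreal_ofReal

lemma ae_nonneg_expMeasure (r : ℝ) : ∀ᵐ x ∂expMeasure r, 0 ≤ x := by
  rw [expMeasure_eq_withDensity, ae_withDensity_iff (measurable_exponentialPDF r)]
  exact ae_of_all _ fun x hx ↦ not_lt.1 fun hneg ↦ hx (exponentialPDF_of_neg hneg)

lemma ae_nonneg_of_map_eq_expMeasure {Ω : Type*} [MeasurableSpace Ω] {P : Measure Ω}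
    {X : Ω → ℝ} (hX : Measurable X) {r : ℝ} (hlaw : P.map X = expMeasure r) :
    ∀ᵐ ω ∂P, 0 ≤ X ω :=
  ae_of_ae_map hX.aemeasurable (hlaw ▸ ae_nonneg_expMeasure r)

lemma exponentialPDF_mul_exponentialPDF_sub {r : ℝ} (hr : 0 ≤ r) (s c : ℝ) :
    exponentialPDF r c * exponentialPDF r (s - c)
      = (Icc 0 s).indicator (fun _ ↦ ENNReal.ofReal (r ^ 2 * exp (-(r * s)))) c := by
  by_cases hc : c ∈ Icc 0 s
  · rw [indicator_of_mem hc, exponentialPDF_of_nonneg hc.1,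
      exponentialPDF_of_nonneg (sub_nonneg.2 hc.2), ← ENNReal.ofReal_mul (by positivity),
      mul_mul_mul_comm, ← exp_add]
    ring_nf
  · rw [indicator_of_notMem hc]
    rcases not_and_or.1 hc with hc | hc
    · rw [exponentialPDF_of_neg (not_le.1 hc), zero_mul]
    · rw [exponentialPDF_of_neg (sub_neg.2 (not_le.1 hc)), mul_zero]

lemma lintegral_expMeasure_prod_expMeasure {r : ℝ} (hr : 0 ≤ r) {f : ℝ × ℝ → ℝ≥0∞}
    (hf : Measurable f) :
    ∫⁻ z, f z ∂(expMeasure r).prod (expMeasure r)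
      = ∫⁻ s in Ici 0, ENNReal.ofReal (r ^ 2 * exp (-(r * s))) *
          ∫⁻ c in Icc 0 s, f (c, s - c) := by
  have hpdf := measurable_exponentialPDF r
  set G : ℝ × ℝ → ℝ≥0∞ :=
    fun z ↦ exponentialPDF r z.1 * exponentialPDF r (z.2 - z.1) * f (z.1, z.2 - z.1)
  have hG : Measurable G := by fun_prop
  calc ∫⁻ z, f z ∂(expMeasure r).prod (expMeasure r)
      = ∫⁻ z, G (z.1, z.1 + z.2) ∂volume.prod volume := by
        rw [expMeasure_eq_withDensity, prod_withDensity hpdf hpdf,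
          lintegral_withDensity_eq_lintegral_mul _ (by fun_prop) hf]
        simp only [G, add_sub_cancel_left, Pi.mul_apply]
    _ = ∫⁻ s, ∫⁻ c, G (c, s) := by
        rw [(measurePreserving_prod_add volume volume).lintegral_comp hG,
          lintegral_prod_symm _ hG.aemeasurable]
    _ = ∫⁻ s, ENNReal.ofReal (r ^ 2 * exp (-(r * s))) * ∫⁻ c in Icc 0 s, f (c, s - c) := by
        refine lintegral_congr fun s ↦ ?_
        simp only [G, exponentialPDF_mul_exponentialPDF_sub hr]
        rw [← lintegral_const_mul' _ _ ENNReal.ofReal_ne_top,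
          ← lintegral_indicator measurableSet_Icc]
        exact lintegral_congr fun c ↦ (indicator_mul_left _ _ (fun c ↦ f (c, s - c))).symm
    _ = _ := by
        refine (setLIntegral_eq_of_support_subset fun s hs ↦ ?_).symm
        by_contra hneg
        rw [mem_Ici, not_le] at hneg
        simp [Icc_eq_empty_of_lt hneg] at hs

end ProbabilityTheory

theorem timing_offset_effective_power_mean_general
    {Ω : Type*} [MeasureSpace Ω] [IsProbabilityMeasure (ℙ : Measure Ω)]
    (lamg : ℝ) (hlamg : 0 < lamg)
    (eps1 : ℝ)
    (C D : Ω → ℝ) (hC : Measurable C) (hD : Measurable D)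
    (hindep : IndepFun C D ℙ)
    (hClaw : Measure.map C ℙ = expMeasure lamg)
    (hDlaw : Measure.map D ℙ = expMeasure lamg) :
    ∫ ω, (C ω + eps1 * D ω) ^ 2 / (C ω + D ω) ∂ℙ
      = 2 * (1 + eps1 + eps1 ^ 2) / (3 * lamg) := by
  have hν : 0 ≤ᵐ[ℙ] fun ω ↦ (C ω + eps1 * D ω) ^ 2 / (C ω + D ω) := by
    filter_upwards [ae_nonneg_of_map_eq_expMeasure hC hClaw,
      ae_nonneg_of_map_eq_expMeasure hD hDlaw] with ω hCω hDω
    positivity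
  have hlaw := hindep.lintegral_comp_eq_lintegral_prod hC hD hClaw hDlaw
    (f := fun z ↦ ENNReal.ofReal ((z.1 + eps1 * z.2) ^ 2 / (z.1 + z.2))) (by fun_prop)
  have hk : 0 ≤ (1 + eps1 + eps1 ^ 2) / 3 := by nlinarith [sq_nonneg (2 * eps1 + 1)]
  have hinner : ∀ s ∈ Ici (0 : ℝ), ENNReal.ofReal (lamg ^ 2 * exp (-(lamg * s))) *
      ∫⁻ c in Icc 0 s, ENNReal.ofReal ((c + eps1 * (s - c)) ^ 2 / (c + (s - c)))
      = ENNReal.ofReal (lamg ^ 2 * ((1 + eps1 + eps1 ^ 2) / 3)) *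
        ENNReal.ofReal (s ^ 2 * exp (-(lamg * s))) := by
    intro s hs
    simp_rw [add_sub_cancel]
    rw [lintegral_Icc_sq_add_mul_sub_div hs, ← ENNReal.ofReal_mul (by positivity),
      ← ENNReal.ofReal_mul (by positivity)]
    ring_nf
  rw [integral_eq_lintegral_of_nonneg_ae hν (by fun_prop : Measurable _).aestronglyMeasurable,
    hlaw, lintegral_expMeasure_prod_expMeasure hlamg.le (by fun_prop),
    setLIntegral_congr_fun measurableSet_Ici hinner,
    lintegral_const_mul' _ _ ENNReal.ofReal_ne_top, lintegral_Ici_sq_mul_exp_neg_mul hlamg,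
    ← ENNReal.ofReal_mul (by positivity), ENNReal.toReal_ofReal (by positivity)]
  field_simp

/-- If `C, D` are independent `Exp(λ_g)` random variables and `0 < ε_1 ≤ 1`, then
`ν = (C + ε_1 D)²/(C + D)` has expectation `2(1 + ε_1 + ε_1²)/(3 λ_g)`. -/
theorem timing_offset_effective_power_mean
    {Ω : Type*} [MeasureSpace Ω] [IsProbabilityMeasure (ℙ : Measure Ω)]
    (lamg : ℝ) (hlamg : 0 < lamg)
    (eps1 : ℝ) (heps1 : 0 < eps1) (heps1' : eps1 ≤ 1)
    (C D : Ω → ℝ) (hC : Measurable C) (hD : Measurable D)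
    (hindep : IndepFun C D ℙ)
    (hClaw : Measure.map C ℙ = expMeasure lamg)
    (hDlaw : Measure.map D ℙ = expMeasure lamg) :
    ∫ ω, (C ω + eps1 * D ω) ^ 2 / (C ω + D ω) ∂ℙ
      = 2 * (1 + eps1 + eps1 ^ 2) / (3 * lamg) :=
  timing_offset_effective_power_mean_general lamg hlamg eps1 C D hC hD hindep hClaw hDlaw
end

section
/- Let C and D be independent, each exponentially distributed with rate λ_g > 0, and let 0 < ε_1 < 1. Then the random variable R = (C + ε_1 D)² / (C + D) has probability density function, with respect to Lebesgue measure, f_R(r) = [λ_g / (4(ε_1 − 1))] · [ (√π / √(λ_g r)) · ( erf(√(λ_g r)) − erf(√(λ_g r)/ε_1) ) + (2/ε_1) e^{−λ_g r / ε_1²} − 2 e^{−λ_g r} ] for r > 0, where erf(x) = (2/√π) ∫_0^x e^{−t²} dt. -/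
open MeasureTheory ProbabilityTheory Real

/-- The Gauss error function `erf x = (2/√π) ∫_0^x e^{−t²} dt`. -/
noncomputable def erf (x : ℝ) : ℝ := 2 / Real.sqrt π * ∫ t in (0 : ℝ)..x, Real.exp (-t ^ 2)

/-!
In the coordinates `s = C + D`, `u = (C + ε₁ D) / (C + D)` the positive quadrant becomes
`(0, ∞) × (ε₁, 1)` with Jacobian `s / (1 - ε₁)`, so the joint density `λ² e^{-λ(c+d)}` becomes
`g(s) = λ² s e^{-λ s} / (1 - ε₁)` times Lebesgue measure in `u`, and `R = u² s`. For fixed `u`,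
`u² s` has density `u⁻² g(r / u²)`; integrating over `u` gives
`f_R(r) = λ² r / (1 - ε₁) ∫_{ε₁}^1 e^{-λ r / u²} u⁻⁴ du`, which after `t = 1 / u` is the Gaussian
moment `∫ t² e^{-λ r t²} dt` and integrates by parts to the `erf` terms.
-/

open Set
open scoped ENNReal

theorem map_withDensity_comp {α β : Type*} [MeasurableSpace α] [MeasurableSpace β]
    (μ : Measure α) {f : α → β} (hf : Measurable f) {g : β → ℝ≥0∞} (hg : Measurable g) :
    Measure.map f (μ.withDensity (g ∘ f)) = (Measure.map f μ).withDensity g := by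
  ext s hs
  rw [Measure.map_apply hf hs, withDensity_apply _ (hf hs), withDensity_apply _ hs,
    setLIntegral_map hs hg hf, Function.comp_def]

theorem map_const_mul_volume_withDensity {c : ℝ} (hc : c ≠ 0) {ρ : ℝ → ℝ≥0∞}
    (hρ : Measurable ρ) :
    Measure.map (c * ·) (volume.withDensity ρ)
      = volume.withDensity fun r => ENNReal.ofReal |c⁻¹| * ρ (r / c) := by
  have hρc : volume.withDensity ρ = volume.withDensity ((fun r => ρ (r / c)) ∘ (c * ·)) := by
    congr with s; simp [mul_div_cancel_left₀ _ hc]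
  rw [hρc, map_withDensity_comp _ (measurable_const_mul c) (g := fun r => ρ (r / c))
      (hρ.comp (measurable_div_const c)),
    Real.map_volume_mul_left hc, withDensity_smul_measure,
    ← withDensity_smul' _ _ ENNReal.ofReal_ne_top]
  rfl

theorem map_mul_prod_volume_withDensity {μ : Measure ℝ} [SFinite μ] {a : ℝ → ℝ}
    (ha : Measurable a) (ha0 : ∀ᵐ u ∂μ, a u ≠ 0) {ρ : ℝ → ℝ≥0∞} (hρ : Measurable ρ) :
    Measure.map (fun p : ℝ × ℝ => a p.2 * p.1) ((volume.withDensity ρ).prod μ)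
      = volume.withDensity fun r => ∫⁻ u, ENNReal.ofReal |(a u)⁻¹| * ρ (r / a u) ∂μ := by
  have hm : Measurable fun p : ℝ × ℝ => a p.2 * p.1 := (ha.comp measurable_snd).mul measurable_fst
  ext A hA
  rw [Measure.map_apply hm hA, Measure.prod_apply_symm (hm hA), withDensity_apply _ hA]
  have hslice : ∀ᵐ u ∂μ, (volume.withDensity ρ)
      ((fun s => (s, u)) ⁻¹' ((fun p : ℝ × ℝ => a p.2 * p.1) ⁻¹' A))
      = ∫⁻ r in A, ENNReal.ofReal |(a u)⁻¹| * ρ (r / a u) := by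
    filter_upwards [ha0] with u hu
    rw [← withDensity_apply _ hA, ← map_const_mul_volume_withDensity hu hρ,
      Measure.map_apply (measurable_const_mul _) hA]
    rfl
  rw [lintegral_congr_ae hslice, lintegral_lintegral_swap]
  exact (((ha.comp measurable_fst).inv.abs.ennreal_ofReal).mul
    (hρ.comp (measurable_snd.div (ha.comp measurable_fst)))).aemeasurable

theorem expMeasure_eq_restrict_Ioi_withDensity (lam : ℝ) :
    expMeasure lam = (volume.restrict (Ioi 0)).withDensity
      fun x => ENNReal.ofReal (lam * exp (-(lam * x))) := by
  have h : exponentialPDF lam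
      = (Ici 0).indicator fun x => ENNReal.ofReal (lam * exp (-(lam * x))) := by
    ext x
    simp only [exponentialPDF_eq, indicator_apply, mem_Ici]
    split_ifs <;> simp
  rw [restrict_Ioi_eq_restrict_Ici, ← withDensity_indicator measurableSet_Ici, ← h]
  rfl

theorem expMeasure_prod_expMeasure {lam : ℝ} (hlam : 0 ≤ lam) :
    (expMeasure lam).prod (expMeasure lam) = (volume.restrict (Ioi 0 ×ˢ Ioi 0)).withDensity
      fun z => ENNReal.ofReal (lam ^ 2 * exp (-(lam * (z.1 + z.2)))) := by
  rw [expMeasure_eq_restrict_Ioi_withDensity, prod_withDensity (by fun_prop) (by fun_prop),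
    Measure.prod_restrict, ← Measure.volume_eq_prod]
  congr with z
  rw [← ENNReal.ofReal_mul (by positivity)]
  congr 1
  rw [mul_add, neg_add, exp_add]
  ring

theorem det_prod_smul_fst_add_smul_snd (a b c d : ℝ) :
    ((a • ContinuousLinearMap.fst ℝ ℝ ℝ + b • ContinuousLinearMap.snd ℝ ℝ ℝ).prod
      (c • ContinuousLinearMap.fst ℝ ℝ ℝ + d • ContinuousLinearMap.snd ℝ ℝ ℝ)).det
      = a * d - b * c := by
  rw [ContinuousLinearMap.det, ← LinearMap.det_toMatrix (Module.Basis.finTwoProd ℝ),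
    Matrix.det_fin_two]
  simp [LinearMap.toMatrix_apply]

/-- The inverse of `(c, d) ↦ (c + d, (c + ε d) / (c + d))`. -/
noncomputable def sumRatioChart (ε : ℝ) (p : ℝ × ℝ) : ℝ × ℝ :=
  (p.1 * (p.2 - ε) / (1 - ε), p.1 * (1 - p.2) / (1 - ε))

section SumRatioChart

variable {ε : ℝ}

theorem continuous_sumRatioChart : Continuous (sumRatioChart ε) := by
  unfold sumRatioChart; fun_prop

theorem sumRatioChart_fst_add_snd (hε : ε ≠ 1) (p : ℝ × ℝ) :
    (sumRatioChart ε p).1 + (sumRatioChart ε p).2 = p.1 := by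
  have : 1 - ε ≠ 0 := sub_ne_zero.2 hε.symm
  simp only [sumRatioChart]
  field_simp
  ring

theorem sumRatioChart_fst_add_mul_snd (hε : ε ≠ 1) (p : ℝ × ℝ) :
    (sumRatioChart ε p).1 + ε * (sumRatioChart ε p).2 = p.1 * p.2 := by
  have : 1 - ε ≠ 0 := sub_ne_zero.2 hε.symm
  simp only [sumRatioChart]
  field_simp
  ring

theorem injOn_sumRatioChart (hε : ε ≠ 1) : InjOn (sumRatioChart ε) {p | p.1 ≠ 0} := by
  intro p hp q _ hpq
  have hs : p.1 = q.1 := by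
    rw [← sumRatioChart_fst_add_snd hε p, ← sumRatioChart_fst_add_snd hε q, hpq]
  have hsu : p.1 * p.2 = q.1 * q.2 := by
    rw [← sumRatioChart_fst_add_mul_snd hε p, ← sumRatioChart_fst_add_mul_snd hε q, hpq]
  rw [hs] at hsu
  exact Prod.ext hs (mul_left_cancel₀ (hs ▸ hp) hsu)

theorem image_sumRatioChart (hε : ε < 1) :
    sumRatioChart ε '' (Ioi 0 ×ˢ Ioo ε 1) = Ioi 0 ×ˢ Ioi 0 := by
  have h1ε : 0 < 1 - ε := sub_pos.2 hε
  ext q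
  constructor
  · rintro ⟨⟨s, u⟩, ⟨hs, hεu, hu1⟩, rfl⟩
    exact ⟨div_pos (mul_pos hs (sub_pos.2 hεu)) h1ε, div_pos (mul_pos hs (sub_pos.2 hu1)) h1ε⟩
  · obtain ⟨c, d⟩ := q
    rintro ⟨hc, hd⟩
    have hc : 0 < c := hc
    have hd : 0 < d := hd
    have hcd : 0 < c + d := add_pos hc hd
    refine ⟨(c + d, (c + ε * d) / (c + d)), ⟨hcd, ?_, ?_⟩, ?_⟩
    · rw [lt_div_iff₀ hcd]; nlinarith
    · rw [div_lt_one hcd]; nlinarith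
    · simp only [sumRatioChart, Prod.mk.injEq]
      constructor <;> field_simp <;> ring

theorem hasFDerivAt_sumRatioChart (p : ℝ × ℝ) :
    HasFDerivAt (sumRatioChart ε)
      ((((p.2 - ε) / (1 - ε)) • ContinuousLinearMap.fst ℝ ℝ ℝ
          + (p.1 / (1 - ε)) • ContinuousLinearMap.snd ℝ ℝ ℝ).prod
        (((1 - p.2) / (1 - ε)) • ContinuousLinearMap.fst ℝ ℝ ℝ
          + (-(p.1 / (1 - ε))) • ContinuousLinearMap.snd ℝ ℝ ℝ)) p := by
  have h : sumRatioChart ε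
      = fun q => (q.1 * (q.2 - ε) * (1 - ε)⁻¹, q.1 * (1 - q.2) * (1 - ε)⁻¹) := by
    funext q; simp only [sumRatioChart, div_eq_mul_inv]
  rw [h]
  refine (((hasFDerivAt_fst.mul (hasFDerivAt_snd.sub_const ε)).mul_const (1 - ε)⁻¹).prodMk
    ((hasFDerivAt_fst.mul (hasFDerivAt_snd.const_sub 1)).mul_const (1 - ε)⁻¹)).congr_fderiv ?_
  ext <;> simp <;> ring

theorem volume_restrict_eq_map_sumRatioChart (hε : ε < 1) :
    volume.restrict (Ioi (0 : ℝ) ×ˢ Ioi (0 : ℝ)) = Measure.map (sumRatioChart ε)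
      ((volume.restrict (Ioi 0 ×ˢ Ioo ε 1)).withDensity
        fun p => ENNReal.ofReal |p.1 / (1 - ε)|) := by
  rw [← image_sumRatioChart hε, ← map_withDensity_abs_det_fderiv_eq_addHaar volume
    (measurableSet_Ioi.prod measurableSet_Ioo).nullMeasurableSet
    (fun p _ => (hasFDerivAt_sumRatioChart p).hasFDerivWithinAt)
    ((injOn_sumRatioChart hε.ne).mono fun p hp => (mem_Ioi.1 hp.1).ne')]
  have h1ε : 1 - ε ≠ 0 := (sub_pos.2 hε).ne'
  congr 3 with p
  rw [det_prod_smul_fst_add_smul_snd, ← abs_neg]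
  congr 2
  field_simp
  ring

theorem overlap_comp_sumRatioChart (hε : ε ≠ 1) :
    (fun z : ℝ × ℝ => (z.1 + ε * z.2) ^ 2 / (z.1 + z.2)) ∘ sumRatioChart ε
      = fun p => p.2 ^ 2 * p.1 := by
  ext p
  simp only [Function.comp_apply, sumRatioChart_fst_add_mul_snd hε, sumRatioChart_fst_add_snd hε]
  rcases eq_or_ne p.1 0 with h | h
  · simp [h]
  · field_simp

end SumRatioChart

theorem expMeasure_prod_eq_map_sumRatioChart {lam ε : ℝ} (hlam : 0 ≤ lam) (hε : ε < 1) :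
    (expMeasure lam).prod (expMeasure lam) = Measure.map (sumRatioChart ε)
      ((volume.withDensity ((Ioi 0).indicator
          fun s => ENNReal.ofReal (lam ^ 2 / (1 - ε) * s * exp (-(lam * s))))).prod
        (volume.restrict (Ioo ε 1))) := by
  rw [expMeasure_prod_expMeasure hlam, volume_restrict_eq_map_sumRatioChart hε,
    ← map_withDensity_comp _ continuous_sumRatioChart.measurable (by fun_prop),
    ← withDensity_mul _ (by fun_prop) (by fun_prop), withDensity_indicator measurableSet_Ioi,
    prod_withDensity_left (by fun_prop), Measure.prod_restrict, ← Measure.volume_eq_prod]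
  congr 1
  refine withDensity_congr_ae ((ae_restrict_iff' (measurableSet_Ioi.prod measurableSet_Ioo)).2
    (ae_of_all _ fun p hp => ?_))
  simp only [Pi.mul_apply, Function.comp_apply, sumRatioChart_fst_add_snd hε.ne]
  rw [← ENNReal.ofReal_mul (abs_nonneg _), abs_of_pos (div_pos hp.1 (sub_pos.2 hε))]
  congr 1
  ring

theorem hasDerivAt_erf (x : ℝ) : HasDerivAt erf (2 / √π * exp (-x ^ 2)) x := by
  have hcont : Continuous fun t : ℝ => exp (-t ^ 2) := by fun_prop
  exact (intervalIntegral.integral_hasDerivAt_right (hcont.intervalIntegrable _ _)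
    (hcont.stronglyMeasurableAtFilter _ _) hcont.continuousAt).const_mul _

noncomputable def expInvSqPrimitive (a u : ℝ) : ℝ :=
  exp (-a / u ^ 2) / (2 * a * u) - √π / (4 * a * √a) * erf (√a / u)

theorem hasDerivAt_expInvSqPrimitive {a u : ℝ} (ha : 0 < a) (hu : 0 < u) :
    HasDerivAt (expInvSqPrimitive a) (exp (-a / u ^ 2) / u ^ 4) u := by
  have hu0 : u ≠ 0 := hu.ne'
  have hsa : √a ^ 2 = a := sq_sqrt ha.le
  have hexp : HasDerivAt (fun v => exp (-a / v ^ 2)) (exp (-a / u ^ 2) * (2 * a / u ^ 3)) u := by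
    refine HasDerivAt.exp (((hasDerivAt_const u (-a)).fun_div (hasDerivAt_pow 2 u)
      (pow_ne_zero 2 hu0)).congr_deriv ?_)
    field_simp
    ring
  have herf : HasDerivAt (fun v => erf (√a / v))
      (2 / √π * exp (-a / u ^ 2) * (-√a / u ^ 2)) u := by
    have h := (hasDerivAt_erf (√a / u)).comp u
      ((hasDerivAt_const u √a).fun_div (hasDerivAt_id' u) hu0)
    rw [div_pow, hsa] at h
    refine h.congr_deriv ?_
    rw [neg_div]
    ring
  refine ((hexp.div ((hasDerivAt_id u).const_mul (2 * a)) (by simp [hu0, ha.ne'])).sub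
    (herf.const_mul (√π / (4 * a * √a)))).congr_deriv ?_
  simp only [id]
  field_simp
  ring

theorem integral_exp_neg_div_sq_div_pow_four {a ε : ℝ} (ha : 0 < a) (hε : 0 < ε) (hε1 : ε ≤ 1) :
    ∫ u in ε..1, exp (-a / u ^ 2) / u ^ 4 = expInvSqPrimitive a 1 - expInvSqPrimitive a ε := by
  have hpos : ∀ u ∈ uIcc ε 1, 0 < u := fun u hu => hε.trans_le (uIcc_of_le hε1 ▸ hu).1
  refine intervalIntegral.integral_eq_sub_of_hasDerivAt
    (fun u hu => hasDerivAt_expInvSqPrimitive ha (hpos u hu)) (ContinuousOn.intervalIntegrable ?_)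
  exact ContinuousOn.div (by fun_prop (disch := exact fun u hu => pow_ne_zero 2 (hpos u hu).ne'))
    (by fun_prop) fun u hu => (pow_pos (hpos u hu) 4).ne'

noncomputable def effectivePowerDensity (lam ε r : ℝ) : ℝ :=
  if 0 < r then
    lam / (4 * (ε - 1)) *
      (√π / √(lam * r) * (erf √(lam * r) - erf (√(lam * r) / ε))
        + 2 / ε * exp (-(lam * r) / ε ^ 2) - 2 * exp (-(lam * r)))
  else 0

theorem effectivePowerDensity_eq_mul_integral {lam ε r : ℝ} (hlam : 0 < lam) (hε : 0 < ε)
    (hε1 : ε < 1) (hr : 0 < r) :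
    effectivePowerDensity lam ε r
      = lam ^ 2 * r / (1 - ε) * ∫ u in ε..1, exp (-(lam * r) / u ^ 2) / u ^ 4 := by
  have ha : 0 < lam * r := mul_pos hlam hr
  have hε1' : ε - 1 ≠ 0 := (sub_neg.2 hε1).ne
  have h1ε : 1 - ε ≠ 0 := (sub_pos.2 hε1).ne'
  rw [effectivePowerDensity, if_pos hr, integral_exp_neg_div_sq_div_pow_four ha hε hε1.le,
    expInvSqPrimitive, expInvSqPrimitive, one_pow, div_one, div_one, mul_one]
  field_simp
  ring

theorem setLIntegral_rescaled_eq_effectivePowerDensity {lam ε : ℝ} (hlam : 0 < lam) (hε : 0 < ε)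
    (hε1 : ε < 1) (r : ℝ) :
    ∫⁻ u in Ioo ε 1, ENNReal.ofReal |(u ^ 2)⁻¹| * (Ioi 0).indicator
        (fun s => ENNReal.ofReal (lam ^ 2 / (1 - ε) * s * exp (-(lam * s)))) (r / u ^ 2)
      = ENNReal.ofReal (effectivePowerDensity lam ε r) := by
  rcases le_or_gt r 0 with hr | hr
  · have hout : ∀ u : ℝ, r / u ^ 2 ∉ Ioi 0 := fun u h =>
      (div_nonpos_of_nonpos_of_nonneg hr (sq_nonneg u)).not_gt h
    simp [effectivePowerDensity, hr.not_gt, hout]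
  have hpos : ∀ u ∈ Icc ε 1, 0 < u := fun u hu => hε.trans_le hu.1
  set f : ℝ → ℝ := fun u => lam ^ 2 * r / (1 - ε) * (exp (-(lam * r) / u ^ 2) / u ^ 4)
  have hf : ContinuousOn f (Icc ε 1) :=
    continuousOn_const.mul (ContinuousOn.div
      (by fun_prop (disch := exact fun u hu => pow_ne_zero 2 (hpos u hu).ne'))
      (by fun_prop) fun u hu => (pow_pos (hpos u hu) 4).ne')
  have hf0 : 0 ≤ᵐ[volume.restrict (Ioo ε 1)] f :=
    (ae_restrict_iff' measurableSet_Ioo).2 (ae_of_all _ fun u _ => by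
      have := sub_pos.2 hε1
      positivity)
  rw [effectivePowerDensity_eq_mul_integral hlam hε hε1 hr, ← intervalIntegral.integral_const_mul,
    intervalIntegral.integral_of_le hε1.le, integral_Ioc_eq_integral_Ioo,
    ofReal_integral_eq_lintegral_ofReal (hf.integrableOn_Icc.mono_set Ioo_subset_Icc_self) hf0]
  refine setLIntegral_congr_fun measurableSet_Ioo fun u hu => ?_
  have hu := hpos u (Ioo_subset_Icc_self hu)
  rw [indicator_of_mem (show r / u ^ 2 ∈ Ioi 0 from div_pos hr (pow_pos hu 2)),
    ← ENNReal.ofReal_mul (abs_nonneg _), abs_of_pos (inv_pos.2 (pow_pos hu 2))]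
  congr 1
  simp only [f]
  field_simp

theorem timing_offset_effective_power_pdf_general
    {Ω : Type*} [MeasureSpace Ω]
    (lamg : ℝ) (hlamg : 0 < lamg)
    (eps1 : ℝ) (heps1 : 0 < eps1) (heps1' : eps1 < 1)
    (C D : Ω → ℝ) (hC : Measurable C) (hD : Measurable D)
    (hindep : IndepFun C D ℙ)
    (hClaw : Measure.map C ℙ = expMeasure lamg)
    (hDlaw : Measure.map D ℙ = expMeasure lamg) :
    Measure.map (fun ω => (C ω + eps1 * D ω) ^ 2 / (C ω + D ω)) ℙ
      = volume.withDensity (fun r =>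
          ENNReal.ofReal (if 0 < r then
              lamg / (4 * (eps1 - 1)) *
                (Real.sqrt π / Real.sqrt (lamg * r) *
                    (erf (Real.sqrt (lamg * r)) - erf (Real.sqrt (lamg * r) / eps1))
                  + 2 / eps1 * Real.exp (-(lamg * r) / eps1 ^ 2)
                  - 2 * Real.exp (-(lamg * r)))
            else 0)) := by
  have : IsProbabilityMeasure (expMeasure lamg) := isProbabilityMeasure_expMeasure hlamg
  have hpair : Measure.map (fun ω => (C ω, D ω)) ℙ = (expMeasure lamg).prod (expMeasure lamg) := by
    rw [(indepFun_iff_map_prod_eq_prod_map_map' hC.aemeasurable hD.aemeasurable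
      (hClaw ▸ inferInstance) (hDlaw ▸ inferInstance)).mp hindep, hClaw, hDlaw]
  have hsq : ∀ᵐ u ∂volume.restrict (Ioo eps1 1), u ^ 2 ≠ 0 :=
    (ae_restrict_iff' measurableSet_Ioo).2
      (ae_of_all _ fun u hu => pow_ne_zero 2 (heps1.trans hu.1).ne')
  change _ = volume.withDensity fun r => ENNReal.ofReal (effectivePowerDensity lamg eps1 r)
  rw [show (fun ω => (C ω + eps1 * D ω) ^ 2 / (C ω + D ω))
      = (fun z : ℝ × ℝ => (z.1 + eps1 * z.2) ^ 2 / (z.1 + z.2)) ∘ fun ω => (C ω, D ω) from rfl,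
    ← Measure.map_map (by fun_prop) (hC.prodMk hD), hpair,
    expMeasure_prod_eq_map_sumRatioChart hlamg.le heps1',
    Measure.map_map (by fun_prop) continuous_sumRatioChart.measurable,
    overlap_comp_sumRatioChart heps1'.ne,
    map_mul_prod_volume_withDensity (a := fun u => u ^ 2) (by fun_prop) hsq
      ((by fun_prop : Measurable _).indicator measurableSet_Ioi)]
  simp_rw [setLIntegral_rescaled_eq_effectivePowerDensity hlamg heps1 heps1']

/-- If `C, D` are independent `Exp(λ_g)` random variables and `0 < ε_1 < 1`, then
`R = (C + ε_1 D)²/(C + D)` has probability density function, with respect to Lebesgue measure,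
`f_R(r) = (λ_g/(4(ε_1 − 1))) [ (√π/√(λ_g r)) (erf(√(λ_g r)) − erf(√(λ_g r)/ε_1))
+ (2/ε_1) e^{−λ_g r/ε_1²} − 2 e^{−λ_g r} ]` for `r > 0`. -/
theorem timing_offset_effective_power_pdf
    {Ω : Type*} [MeasureSpace Ω] [IsProbabilityMeasure (ℙ : Measure Ω)]
    (lamg : ℝ) (hlamg : 0 < lamg)
    (eps1 : ℝ) (heps1 : 0 < eps1) (heps1' : eps1 < 1)
    (C D : Ω → ℝ) (hC : Measurable C) (hD : Measurable D)
    (hindep : IndepFun C D ℙ)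
    (hClaw : Measure.map C ℙ = expMeasure lamg)
    (hDlaw : Measure.map D ℙ = expMeasure lamg) :
    Measure.map (fun ω => (C ω + eps1 * D ω) ^ 2 / (C ω + D ω)) ℙ
      = volume.withDensity (fun r =>
          ENNReal.ofReal (if 0 < r then
              lamg / (4 * (eps1 - 1)) *
                (Real.sqrt π / Real.sqrt (lamg * r) *
                    (erf (Real.sqrt (lamg * r)) - erf (Real.sqrt (lamg * r) / eps1))
                  + 2 / eps1 * Real.exp (-(lamg * r) / eps1 ^ 2)
                  - 2 * Real.exp (-(lamg * r)))
            else 0)) :=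
  timing_offset_effective_power_pdf_general lamg hlamg eps1 heps1 heps1' C D hC hD hindep hClaw
    hDlaw
end
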